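/- Let G be a graph on [n] and π = π_z(G) its encoding. Every decreasing subsequence of π contains entries from the separating runs of at most one vertex: once the subsequence contains an entry of a separating run of a vertex v, all subsequent entries of the subsequence belong to the left or right separating run of v. -/

import Mathlib

open scoped Classical

noncomputable section

/-- Number of right-neighbours of `v` (neighbours `u` with `v < u ≤ n`). -/
def degPlus (n : ℕ) (E : ℕ → ℕ → Prop) (v : ℕ) : ℕ :=
  ((Finset.Icc (v + 1) n).filter (fun u => E v u)).card

/-- Number of left-neighbours of `v` (neighbours `u` with `1 ≤ u < v`). -/
def degMinus (n : ℕ) (E : ℕ → ℕ → Prop) (v : ℕ) : ℕ :=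
  ((Finset.Icc 1 (v - 1)).filter (fun u => E v u)).card

/-- The number of edges of the graph with vertex set `[1, n]` and adjacency `E`. -/
def edgeCount (n : ℕ) (E : ℕ → ℕ → Prop) : ℕ :=
  (((Finset.Icc 1 n) ×ˢ (Finset.Icc 1 n)).filter (fun p => p.1 < p.2 ∧ E p.1 p.2)).card

/-- Starting position of the left separating run of `v`. -/
def pL (n z : ℕ) (E : ℕ → ℕ → Prop) (v : ℕ) : ℕ :=
  1 + ∑ w ∈ Finset.Ico 1 v, (2 * z + degPlus n E w)

/-- Starting position of the encoding entries of `v`. -/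
def pM (n z : ℕ) (E : ℕ → ℕ → Prop) (v : ℕ) : ℕ := pL n z E v + z

/-- Starting position of the right separating run of `v`. -/
def pR (n z : ℕ) (E : ℕ → ℕ → Prop) (v : ℕ) : ℕ := pM n z E v + degPlus n E v

/-- Starting (largest) value of the right separating run of `v`. -/
def qR (n z : ℕ) (E : ℕ → ℕ → Prop) (v : ℕ) : ℕ :=
  z + ∑ w ∈ Finset.Ico 1 v, (2 * z + degMinus n E w)

/-- Least value reserved for the encoding entries pointing to `v`. -/
def qM (n z : ℕ) (E : ℕ → ℕ → Prop) (v : ℕ) : ℕ := qR n z E v + 1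

/-- Starting (largest) value of the left separating run of `v`. -/
def qL (n z : ℕ) (E : ℕ → ℕ → Prop) (v : ℕ) : ℕ := qR n z E v + z + degMinus n E v

/-- `ℓ(v, u) = |{w < v : {w, u} ∈ E}|`. -/
def ellE (E : ℕ → ℕ → Prop) (v u : ℕ) : ℕ :=
  ((Finset.Ico 1 v).filter (fun w => E w u)).card

/-- The sorted list of right-neighbours of `v`. -/
def nbrList (n : ℕ) (E : ℕ → ℕ → Prop) (v : ℕ) : List ℕ :=
  Finset.sort ((Finset.Icc (v + 1) n).filter (fun u => E v u)) (· ≤ ·)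

/-- The encoding permutation `π_z(G)` of the paper, as a function on positions
(acting on `[1, 2zn + |E(G)|]`): for each vertex `v` (in order) it consists of a
decreasing run of length `z` starting with value `qL v`, then one encoding entry
`qM u + ℓ(v, u)` for each right-neighbour `u` of `v` in increasing order, then a
decreasing run of length `z` starting with value `qR v`. -/
def enc (n z : ℕ) (E : ℕ → ℕ → Prop) (i : ℕ) : ℕ :=
  if h1 : ∃ v, v ∈ Finset.Icc 1 n ∧ pL n z E v ≤ i ∧ i < pM n z E v then
    qL n z E h1.choose - (i - pL n z E h1.choose)
  else if h2 : ∃ v, v ∈ Finset.Icc 1 n ∧ pR n z E v ≤ i ∧ i < pR n z E v + z then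
    qR n z E h2.choose - (i - pR n z E h2.choose)
  else if h3 : ∃ v, v ∈ Finset.Icc 1 n ∧ pM n z E v ≤ i ∧ i < pR n z E v then
    (fun v => (fun u => qM n z E u + ellE E v u)
      ((nbrList n E v).getD (i - pM n z E v) 0)) h3.choose
  else 0

/-- `i` lies in the left or right separating run of the vertex `v`. -/
def inRunOf (n z : ℕ) (E : ℕ → ℕ → Prop) (v i : ℕ) : Prop :=
  (pL n z E v ≤ i ∧ i < pL n z E v + z) ∨ (pR n z E v ≤ i ∧ i < pR n z E v + z)

/-- `i` lies in some separating run. -/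
def inSepRun (n z : ℕ) (E : ℕ → ℕ → Prop) (i : ℕ) : Prop :=
  ∃ v, v ∈ Finset.Icc 1 n ∧ inRunOf n z E v i

/-- `σ`, a bijection of `[1, l]`, is a pattern of `π`, a bijection of `[1, m]`:
there is a strictly increasing `φ : [1, l] → [1, m]` with
`σ x < σ y ↔ π (φ x) < π (φ y)`. -/
def IsPatternOn (σ : ℕ → ℕ) (l : ℕ) (π : ℕ → ℕ) (m : ℕ) : Prop :=
  ∃ φ : ℕ → ℕ, Set.MapsTo φ (Set.Icc 1 l) (Set.Icc 1 m) ∧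
    StrictMonoOn φ (Set.Icc 1 l) ∧
    ∀ x ∈ Set.Icc 1 l, ∀ y ∈ Set.Icc 1 l, (σ x < σ y ↔ π (φ x) < π (φ y))

end

/-!
Positions of `π_z(G)` fall into consecutive blocks, one per vertex, and the values are laid out
so that `q_R(v + 1) = q_L(v) + z`. Hence every entry in the block of a vertex `u > v` exceeds
`q_L(v)`, and so does every encoding entry in the block of `v` itself, since it points to a
right-neighbour of `v`. An entry of a separating run of `v` is at most `q_L(v)`, so a decreasing
subsequence can continue past it only inside the two separating runs of `v`.
-/

section Encoding

variable {n z : ℕ} {E : ℕ → ℕ → Prop}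

lemma pL_mono : Monotone (pL n z E) := fun _ _ h =>
  Nat.add_le_add_left (Finset.sum_le_sum_of_subset (Finset.Ico_subset_Ico le_rfl h)) 1

lemma qR_mono : Monotone (qR n z E) := fun _ _ h =>
  Nat.add_le_add_left (Finset.sum_le_sum_of_subset (Finset.Ico_subset_Ico le_rfl h)) z

lemma pL_succ {v : ℕ} (hv : 1 ≤ v) : pL n z E (v + 1) = pR n z E v + z := by
  simp only [pR, pM, pL, Finset.sum_Ico_succ_top hv]
  ring

lemma qR_succ {v : ℕ} (hv : 1 ≤ v) : qR n z E (v + 1) = qL n z E v + z := by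
  simp only [qL, qR, Finset.sum_Ico_succ_top hv]
  ring

lemma sum_degPlus_eq_edgeCount :
    ∑ w ∈ Finset.Icc 1 n, degPlus n E w = edgeCount n E := by
  rw [edgeCount, Finset.card_eq_sum_card_fiberwise (f := Prod.fst) (t := Finset.Icc 1 n)
    fun p hp => (Finset.mem_product.mp (Finset.mem_filter.mp hp).1).1]
  refine Finset.sum_congr rfl fun w hw => ?_
  rw [Finset.mem_Icc] at hw
  refine Finset.card_bij (fun u _ => (w, u)) ?_ (fun _ _ _ _ h => (Prod.ext_iff.mp h).2) ?_
  · intro u hu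
    simp only [Finset.mem_filter, Finset.mem_Icc] at hu
    simp only [Finset.mem_filter, Finset.mem_product, Finset.mem_Icc]
    exact ⟨⟨⟨hw, by omega, hu.1.2⟩, by omega, hu.2⟩, trivial⟩
  · rintro ⟨w', u⟩ hp
    simp only [Finset.mem_filter, Finset.mem_product, Finset.mem_Icc] at hp
    obtain ⟨⟨⟨-, -, hu⟩, hlt, hE⟩, rfl⟩ := hp
    exact ⟨u, Finset.mem_filter.mpr ⟨Finset.mem_Icc.mpr ⟨hlt, hu⟩, hE⟩, rfl⟩

lemma pL_succ_last : pL n z E (n + 1) = 2 * z * n + edgeCount n E + 1 := by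
  rw [pL, Finset.sum_add_distrib, Finset.Ico_add_one_right_eq_Icc, sum_degPlus_eq_edgeCount]
  simp only [Finset.sum_const, Nat.card_Icc, Nat.add_sub_cancel, smul_eq_mul]
  ring

variable (n z E) in
def InBlock (u i : ℕ) : Prop := pL n z E u ≤ i ∧ i < pL n z E (u + 1)

lemma InBlock.eq {u w i : ℕ} (hu : InBlock n z E u i) (hw : InBlock n z E w i) : u = w := by
  by_contra hne
  rcases lt_or_gt_of_ne hne with h | h
  · exact absurd (hu.2.trans_le (pL_mono h)) (not_lt.mpr hw.1)
  · exact absurd (hw.2.trans_le (pL_mono h)) (not_lt.mpr hu.1)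

lemma inBlock_of_left {u i : ℕ} (hu : 1 ≤ u) (h : pL n z E u ≤ i ∧ i < pM n z E u) :
    InBlock n z E u i :=
  ⟨h.1, by rw [pL_succ hu]; unfold pR; omega⟩

lemma inBlock_of_mid {u i : ℕ} (hu : 1 ≤ u) (h : pM n z E u ≤ i ∧ i < pR n z E u) :
    InBlock n z E u i :=
  ⟨by unfold pM at h; omega, by rw [pL_succ hu]; omega⟩

lemma inBlock_of_right {u i : ℕ} (hu : 1 ≤ u) (h : pR n z E u ≤ i ∧ i < pR n z E u + z) :
    InBlock n z E u i :=
  ⟨by unfold pR pM at h; omega, pL_succ hu ▸ h.2⟩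

lemma exists_inBlock {v i : ℕ} (hv : pL n z E v ≤ i) (hi : i < pL n z E (n + 1)) :
    ∃ u, v ≤ u ∧ u ≤ n ∧ InBlock n z E u i := by
  have hex : ∃ u, i < pL n z E (u + 1) := ⟨n, hi⟩
  have hle : v ≤ Nat.find hex := by
    by_contra! h
    exact absurd ((Nat.find_spec hex).trans_le (pL_mono h)) (not_lt.mpr hv)
  refine ⟨Nat.find hex, hle, Nat.find_min' hex hi, ?_, Nat.find_spec hex⟩
  rcases hle.eq_or_lt with h | h
  · exact h ▸ hv
  · have := Nat.find_min hex (show Nat.find hex - 1 < Nat.find hex by omega)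
    rwa [Nat.sub_add_cancel (by omega), not_lt] at this

/- `enc` picks its vertex with `Classical.choose`; the chosen vertex is pinned down because
distinct vertices have disjoint blocks. -/
lemma choose_eq_of_inBlock {P : ℕ → Prop} {v i : ℕ} (h : ∃ w, w ∈ Finset.Icc 1 n ∧ P w)
    (hP : ∀ w, 1 ≤ w → P w → InBlock n z E w i) (hv : InBlock n z E v i) : h.choose = v :=
  (hP _ (Finset.mem_Icc.mp h.choose_spec.1).1 h.choose_spec.2).eq hv

lemma not_exists_of_inBlock {P : ℕ → Prop} {v i : ℕ}
    (hP : ∀ w, 1 ≤ w → P w → InBlock n z E w i) (hv : InBlock n z E v i) (hPv : ¬ P v) :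
    ¬ ∃ w, w ∈ Finset.Icc 1 n ∧ P w := by
  rintro ⟨w, hw, hPw⟩
  exact hPv ((hP w (Finset.mem_Icc.mp hw).1 hPw).eq hv ▸ hPw)

lemma enc_of_left {v i : ℕ} (hv : v ∈ Finset.Icc 1 n) (h₁ : pL n z E v ≤ i)
    (h₂ : i < pM n z E v) : enc n z E i = qL n z E v - (i - pL n z E v) := by
  rw [enc, dif_pos ⟨v, hv, h₁, h₂⟩, choose_eq_of_inBlock _ (fun _ => inBlock_of_left)
    (inBlock_of_left (Finset.mem_Icc.mp hv).1 ⟨h₁, h₂⟩)]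

lemma enc_of_right {v i : ℕ} (hv : v ∈ Finset.Icc 1 n) (h₁ : pR n z E v ≤ i)
    (h₂ : i < pR n z E v + z) : enc n z E i = qR n z E v - (i - pR n z E v) := by
  have hvi := inBlock_of_right (Finset.mem_Icc.mp hv).1 ⟨h₁, h₂⟩
  rw [enc, dif_neg (not_exists_of_inBlock (fun _ => inBlock_of_left) hvi
      (by unfold pR at h₁; omega)),
    dif_pos ⟨v, hv, h₁, h₂⟩, choose_eq_of_inBlock _ (fun _ => inBlock_of_right) hvi]

lemma enc_of_mid {v i : ℕ} (hv : v ∈ Finset.Icc 1 n) (h₁ : pM n z E v ≤ i)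
    (h₂ : i < pR n z E v) :
    enc n z E i = qM n z E ((nbrList n E v).getD (i - pM n z E v) 0)
      + ellE E v ((nbrList n E v).getD (i - pM n z E v) 0) := by
  have hvi := inBlock_of_mid (Finset.mem_Icc.mp hv).1 ⟨h₁, h₂⟩
  rw [enc, dif_neg (not_exists_of_inBlock (fun _ => inBlock_of_left) hvi (by omega)),
    dif_neg (not_exists_of_inBlock (fun _ => inBlock_of_right) hvi (by omega)),
    dif_pos ⟨v, hv, h₁, h₂⟩, choose_eq_of_inBlock _ (fun _ => inBlock_of_mid) hvi]

lemma z_le_qR (v : ℕ) : z ≤ qR n z E v := Nat.le_add_right _ _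

lemma lt_getD_nbrList {v j : ℕ} (hj : j < degPlus n E v) : v < (nbrList n E v).getD j 0 := by
  have hlen : (nbrList n E v).length = degPlus n E v := Finset.length_sort _
  have hj' : j < (nbrList n E v).length := hlen ▸ hj
  have hmem := List.getElem_mem hj'
  rw [← List.getD_eq_getElem _ 0 hj', nbrList, Finset.mem_sort, Finset.mem_filter,
    Finset.mem_Icc] at hmem
  exact hmem.1.1

lemma qL_lt_enc_of_mid {v i : ℕ} (hv : v ∈ Finset.Icc 1 n) (h₁ : pM n z E v ≤ i)
    (h₂ : i < pR n z E v) : qL n z E v < enc n z E i := by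
  have hvu : v < (nbrList n E v).getD (i - pM n z E v) 0 :=
    lt_getD_nbrList (by unfold pR at h₂; omega)
  have hq : qR n z E (v + 1) ≤ qR n z E ((nbrList n E v).getD (i - pM n z E v) 0) :=
    qR_mono hvu
  rw [qR_succ (Finset.mem_Icc.mp hv).1] at hq
  rw [enc_of_mid hv h₁ h₂, qM]
  omega

lemma qR_lt_enc_add {u i : ℕ} (hu : u ∈ Finset.Icc 1 n) (hi : InBlock n z E u i) :
    qR n z E u < enc n z E i + z := by
  rcases lt_or_ge i (pM n z E u) with hL | hL
  · rw [enc_of_left hu hi.1 hL, qL]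
    have := hi.1
    unfold pM at hL
    omega
  rcases lt_or_ge i (pR n z E u) with hM | hM
  · have : qL n z E u < enc n z E i := qL_lt_enc_of_mid hu hL hM
    unfold qL at this
    omega
  · have hR : i < pR n z E u + z := pL_succ (Finset.mem_Icc.mp hu).1 ▸ hi.2
    have : z ≤ qR n z E u := z_le_qR u
    rw [enc_of_right hu hM hR]
    omega

lemma enc_le_qL_of_inRunOf {v i : ℕ} (hv : v ∈ Finset.Icc 1 n) (h : inRunOf n z E v i) :
    enc n z E i ≤ qL n z E v := by
  rcases h with ⟨h₁, h₂⟩ | ⟨h₁, h₂⟩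
  · rw [enc_of_left hv h₁ h₂]
    omega
  · rw [enc_of_right hv h₁ h₂, qL]
    omega

lemma qL_lt_enc_of_not_inRunOf {v i : ℕ} (hv : v ∈ Finset.Icc 1 n) (h₁ : pL n z E v ≤ i)
    (h₂ : i < pL n z E (n + 1)) (h : ¬ inRunOf n z E v i) : qL n z E v < enc n z E i := by
  obtain ⟨u, hvu, hun, hui⟩ := exists_inBlock h₁ h₂
  have hv₁ := (Finset.mem_Icc.mp hv).1
  rcases hvu.eq_or_lt with rfl | hvu
  · have hend := hui.2
    rw [pL_succ hv₁] at hend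
    unfold inRunOf at h
    exact qL_lt_enc_of_mid hv (by unfold pM; omega) (by omega)
  · have hq : qR n z E (v + 1) ≤ qR n z E u := qR_mono hvu
    have := qR_lt_enc_add (Finset.mem_Icc.mpr ⟨by omega, hun⟩) hui
    rw [qR_succ hv₁] at hq
    omega

end Encoding

theorem decreasing_subseq_single_sep_vertex_general (n z : ℕ) (E : ℕ → ℕ → Prop)
    (k : ℕ) (φ : Fin k → ℕ) (hφ : StrictMono φ)
    (hin : ∀ x, φ x ∈ Set.Icc 1 (2 * z * n + edgeCount n E))
    (hdec : StrictAnti (fun x => enc n z E (φ x)))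
    (v : ℕ) (hv : v ∈ Finset.Icc 1 n)
    (a : Fin k) (ha : inRunOf n z E v (φ a)) :
    ∀ b : Fin k, a ≤ b → inRunOf n z E v (φ b) := by
  intro b hab
  rcases hab.eq_or_lt with rfl | hlt
  · exact ha
  by_contra hb
  have hstart : pL n z E v ≤ φ b := by
    have := hφ hlt
    unfold inRunOf pR pM at ha
    omega
  have hend : φ b < pL n z E (n + 1) := pL_succ_last ▸ Nat.lt_succ_of_le (hin b).2
  have hbig := qL_lt_enc_of_not_inRunOf hv hstart hend hb
  have hsmall := enc_le_qL_of_inRunOf hv ha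
  have hdrop : enc n z E (φ b) < enc n z E (φ a) := hdec hlt
  omega

/-- Every decreasing subsequence of `enc n z E` contains separating-run entries of at most
one vertex: once it contains an entry of a separating run of `v`, all subsequent entries
lie in the left or right separating run of `v`. -/
theorem decreasing_subseq_single_sep_vertex (n z : ℕ) (E : ℕ → ℕ → Prop)
    (hsym : ∀ u v, E u v → E v u)
    (hrange : ∀ u v, E u v → u ∈ Finset.Icc 1 n ∧ v ∈ Finset.Icc 1 n)
    (hirr : ∀ v, ¬ E v v)
    (k : ℕ) (φ : Fin k → ℕ) (hφ : StrictMono φ)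
    (hin : ∀ x, φ x ∈ Set.Icc 1 (2 * z * n + edgeCount n E))
    (hdec : StrictAnti (fun x => enc n z E (φ x)))
    (v : ℕ) (hv : v ∈ Finset.Icc 1 n)
    (a : Fin k) (ha : inRunOf n z E v (φ a)) :
    ∀ b : Fin k, a ≤ b → inRunOf n z E v (φ b) :=
  decreasing_subseq_single_sep_vertex_general n z E k φ hφ hin hdec v hv a ha
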